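/- arXiv:1911.07166 — 2 statements merged into one kernel-verified Lean document; each statement's English description precedes it below -/
import Mathlib

section
/- An embedded space curve C admits both an orientation-reversing positive symmetry (det = +1) and an orientation-reversing negative symmetry (det = -1) simultaneously if and only if C lies in a plane and C has a non-trivial symmetry. -/
open Set Real RealInnerProductSpace Filter Topology

local notation "E3" => EuclideanSpace ℝ (Fin 3)

lemma aux_det_pm_one (A : E3 ≃ₗᵢ[ℝ] E3) :
    LinearMap.det (A.toLinearEquiv : E3 →ₗ[ℝ] E3) = 1 ∨
    LinearMap.det (A.toLinearEquiv : E3 →ₗ[ℝ] E3) = -1 := by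
  classical
  set b := stdOrthonormalBasis ℝ (EuclideanSpace ℝ (Fin 3)) with hb
  have h := b.det_to_matrix_orthonormalBasis_real (b.map A)
  have hc : ⇑(b.map A) = ⇑(A.toLinearEquiv : E3 →ₗ[ℝ] E3) ∘ ⇑b.toBasis := by
    funext i; simp [OrthonormalBasis.map_apply]
  rw [hc, Module.Basis.det_comp, Module.Basis.det_self, mul_one] at h
  exact h

lemma aux_det_reflection (v : E3) (hv : v ≠ 0) :
    LinearMap.det ((Submodule.reflection ((ℝ ∙ v)ᗮ)).toLinearEquiv : E3 →ₗ[ℝ] E3) = -1 := by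
  have h := Submodule.det_reflection ((ℝ ∙ v)ᗮ : Submodule ℝ E3)
  rw [Submodule.orthogonal_orthogonal, finrank_span_singleton hv, pow_one] at h
  exact h

lemma aux_det_trans (A B : E3 ≃ₗᵢ[ℝ] E3) :
    LinearMap.det ((A.trans B).toLinearEquiv : E3 →ₗ[ℝ] E3)
      = LinearMap.det (B.toLinearEquiv : E3 →ₗ[ℝ] E3)
        * LinearMap.det (A.toLinearEquiv : E3 →ₗ[ℝ] E3) := by
  have : ((A.trans B).toLinearEquiv : E3 →ₗ[ℝ] E3)
      = (B.toLinearEquiv : E3 →ₗ[ℝ] E3) ∘ₗ (A.toLinearEquiv : E3 →ₗ[ℝ] E3) := by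
    ext x; simp
  rw [this, LinearMap.det_comp]


lemma aux_reverse (l : ℝ) (hl : 0 < l) (c : ℝ → E3)
    (hc_inj : InjOn c (Icc (-(l/2)) (l/2)))
    (harc : ∀ s ∈ Icc (-(l/2)) (l/2), ‖deriv c s‖ = 1)
    (A : E3 ≃ₗᵢ[ℝ] E3) (w : E3)
    (hImg : (fun x => A x + w) '' (c '' Icc (-(l/2)) (l/2)) = c '' Icc (-(l/2)) (l/2))
    (hmv : ∃ x ∈ c '' Icc (-(l/2)) (l/2), A x + w ≠ x) :
    ∀ s ∈ Icc (-(l/2)) (l/2), A (c s) + w = c (-s) := by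
  classical
  set K : Set ℝ := Icc (-(l/2)) (l/2) with hK
  have hlt : -(l/2) < l/2 := by linarith
  have hle : -(l/2) ≤ l/2 := hlt.le
  -- differentiability from the arclength hypothesis
  have hdiff : ∀ s ∈ K, DifferentiableAt ℝ c s := by
    intro s hs
    by_contra h
    have := harc s hs
    rw [deriv_zero_of_not_differentiableAt h, norm_zero] at this
    exact zero_ne_one this
  have hcont : ContinuousOn c K := fun s hs =>
    (hdiff s hs).continuousAt.continuousWithinAt
  -- the chordal slope tends to 1
  have hslope : ∀ s ∈ K, Tendsto (fun t => ‖c t - c s‖ / |t - s|) (𝓝[K \ {s}] s) (𝓝 1) := by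
    intro s hs
    have h1 : Tendsto (slope c s) (𝓝[≠] s) (𝓝 (deriv c s)) :=
      hasDerivAt_iff_tendsto_slope.mp (hdiff s hs).hasDerivAt
    have h2 : Tendsto (fun t => ‖slope c s t‖) (𝓝[≠] s) (𝓝 1) := by
      have := h1.norm
      rwa [harc s hs] at this
    have h3 : Tendsto (fun t => ‖slope c s t‖) (𝓝[K \ {s}] s) (𝓝 1) :=
      h2.mono_left (nhdsWithin_mono _ (fun t ht => ht.2))
    refine h3.congr (fun t => ?_)
    rw [slope_def_module, norm_smul, norm_inv, Real.norm_eq_abs, abs_sub_comm,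
      inv_mul_eq_div]
  -- definition of the parameter map f
  have hmemC : ∀ s ∈ K, ∃ u ∈ K, c u = A (c s) + w := by
    intro s hs
    have : A (c s) + w ∈ (fun x => A x + w) '' (c '' K) :=
      mem_image_of_mem _ (mem_image_of_mem _ hs)
    rw [hImg] at this
    obtain ⟨u, hu, hcu⟩ := this
    exact ⟨u, hu, hcu⟩
  set f : ℝ → ℝ := fun s => if h : s ∈ K then (hmemC s h).choose else s with hf
  have hfK : ∀ s ∈ K, f s ∈ K := by
    intro s hs; rw [hf]; simp only [dif_pos hs]; exact (hmemC s hs).choose_spec.1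
  have hfc : ∀ s ∈ K, c (f s) = A (c s) + w := by
    intro s hs; rw [hf]; simp only [dif_pos hs]; exact (hmemC s hs).choose_spec.2
  have hfinj : InjOn f K := by
    intro s hs t ht h
    have h1 : c (f s) = c (f t) := by rw [h]
    rw [hfc s hs, hfc t ht] at h1
    have h2 : A (c s) = A (c t) := by
      have := add_right_cancel h1; exact this
    exact hc_inj hs ht (A.injective h2)
  have hfsurj : ∀ u ∈ K, ∃ s ∈ K, f s = u := by
    intro u hu
    have : c u ∈ (fun x => A x + w) '' (c '' K) := by
      rw [hImg]; exact mem_image_of_mem _ hu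
    obtain ⟨x, ⟨s, hs, rfl⟩, hx⟩ := this
    refine ⟨s, hs, hc_inj (hfK s hs) hu ?_⟩
    rw [hfc s hs]; exact hx
  -- chord preservation
  have hchord : ∀ s ∈ K, ∀ t ∈ K, ‖c (f t) - c (f s)‖ = ‖c t - c s‖ := by
    intro s hs t ht
    rw [hfc s hs, hfc t ht]
    have : A (c t) + w - (A (c s) + w) = A (c t - c s) := by
      rw [map_sub]; abel
    rw [this, A.norm_map]
  -- continuity of f
  haveI : CompactSpace ↥K := isCompact_iff_compactSpace.mp (hK ▸ isCompact_Icc)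
  have hemb : IsEmbedding (K.restrict c) :=
    (hcont.restrict.isClosedEmbedding (injOn_iff_injective.mp hc_inj)).toIsEmbedding
  have hfhat_cont : Continuous (fun x : ↥K => (⟨f x, hfK x x.2⟩ : ↥K)) := by
    rw [hemb.continuous_iff]
    have : (K.restrict c) ∘ (fun x : ↥K => (⟨f x, hfK x x.2⟩ : ↥K))
        = fun x : ↥K => A (c x) + w := by
      funext x; exact hfc x x.2
    rw [this]
    exact (A.continuous.comp (hcont.restrict)).add continuous_const
  have hfcont : ContinuousOn f K := by
    rw [continuousOn_iff_continuous_restrict]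
    exact continuous_subtype_val.comp hfhat_cont
  -- the ratio |f t - f s| / |t - s| tends to 1
  have hratio : ∀ s ∈ K, Tendsto (fun t => |f t - f s| / |t - s|) (𝓝[K \ {s}] s) (𝓝 1) := by
    intro s hs
    have hfs := hfK s hs
    have h1 := hslope s hs
    have h2 := hslope (f s) hfs
    have hft : Tendsto f (𝓝[K \ {s}] s) (𝓝[K \ {f s}] (f s)) := by
      rw [tendsto_nhdsWithin_iff]
      constructor
      · exact (hfcont s hs).mono_left (nhdsWithin_mono _ (fun t ht => ht.1))
      · filter_upwards [eventually_mem_nhdsWithin] with t ht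
        exact ⟨hfK t ht.1, fun h => ht.2 (hfinj ht.1 hs h)⟩
    have h3 : Tendsto (fun t => ‖c (f t) - c (f s)‖ / |f t - f s|) (𝓝[K \ {s}] s) (𝓝 1) :=
      h2.comp hft
    have h4 := h1.div h3 one_ne_zero
    rw [div_one] at h4
    refine h4.congr' ?_
    filter_upwards [eventually_mem_nhdsWithin] with t ht
    have htK := ht.1
    have hts : t ≠ s := ht.2
    have hcts : c t - c s ≠ 0 := sub_ne_zero.mpr (fun h => hts (hc_inj htK hs h))
    have hfts : f t ≠ f s := fun h => hts (hfinj htK hs h)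
    have hch := hchord s hs t htK
    simp only [Pi.div_apply]
    rw [hch]
    have hn : ‖c t - c s‖ ≠ 0 := norm_ne_zero_iff.mpr hcts
    have hd1 : |t - s| ≠ 0 := by
      simp only [ne_eq, abs_eq_zero, sub_eq_zero]; exact hts
    have hd2 : |f t - f s| ≠ 0 := by
      simp only [ne_eq, abs_eq_zero, sub_eq_zero]; exact hfts
    field_simp
  -- monotone or antitone
  have hsplit : StrictMonoOn f K ∨ StrictAntiOn f K := by
    rw [hK]
    exact ContinuousOn.strictMonoOn_of_injOn_Icc' hle (hK ▸ hfcont) (hK ▸ hfinj)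
  -- derivative of f
  have hfd : ∀ e : ℝ, (∀ s ∈ K, ∀ t ∈ K, t ≠ s → slope f s t = e * (|f t - f s| / |t - s|)) →
      ∀ s ∈ K, HasDerivWithinAt f e K s := by
    intro e he s hs
    rw [hasDerivWithinAt_iff_tendsto_slope]
    have h1 := (hratio s hs).const_mul e
    rw [mul_one] at h1
    refine h1.congr' ?_
    filter_upwards [eventually_mem_nhdsWithin] with t ht
    exact (he s hs t ht.1 ht.2).symm
  have hkey : ∀ e : ℝ, (∀ s ∈ K, HasDerivWithinAt f e K s) →
      ∀ s ∈ K, f s = f (-(l/2)) + e * (s + l/2) := by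
    intro e he s hs
    have hgd : ∀ x ∈ K, HasDerivWithinAt (fun s => f s - e * s) 0 K x := by
      intro x hx
      have h1 := (he x hx).sub ((hasDerivWithinAt_id x K).const_mul e)
      rw [mul_one, sub_self] at h1
      exact h1
    have hconst := constant_of_derivWithin_zero (f := fun s => f s - e * s)
      (a := -(l/2)) (b := l/2)
      (fun x hx => (hgd x (hK ▸ hx)).differentiableWithinAt)
      (fun x hx => (hgd x (hK ▸ (mem_Icc.mpr ⟨hx.1, hx.2.le⟩))).derivWithin
        ((uniqueDiffOn_Icc hlt) x (mem_Icc.mpr ⟨hx.1, hx.2.le⟩)))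
    have := hconst s (hK ▸ hs)
    have h2 : f s - e * s = f (-(l/2)) - e * (-(l/2)) := this
    linarith [h2]
  -- case split on monotone/antitone
  rcases hsplit with hmono | hanti
  · -- monotone case: f = id, contradicting that the symmetry moves a point
    exfalso
    have he1 : ∀ s ∈ K, HasDerivWithinAt f 1 K s := by
      refine hfd 1 (fun s hs t ht hts => ?_)
      rw [one_mul, slope_def_field]
      rcases hts.lt_or_gt with h | h
      · rw [abs_of_neg (sub_neg.mpr (hmono ht hs h)), abs_of_neg (sub_neg.mpr h),
          neg_div_neg_eq]
      · rw [abs_of_pos (sub_pos.mpr (hmono hs ht h)), abs_of_pos (sub_pos.mpr h)]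
    have hlin := hkey 1 he1
    have hb1 : f (-(l/2)) ∈ K := hfK _ (by rw [hK]; exact ⟨le_refl _, hle⟩)
    have hb2 : f (l/2) ∈ K := hfK _ (by rw [hK]; exact ⟨hle, le_refl _⟩)
    have hfl2 : f (l/2) = f (-(l/2)) + 1 * (l/2 + l/2) :=
      hlin (l/2) (by rw [hK]; exact ⟨hle, le_refl _⟩)
    rw [hK, mem_Icc] at hb1 hb2
    have hb : f (-(l/2)) = -(l/2) := by
      have := hb2.2
      rw [hfl2] at this
      linarith [hb1.1]
    have hid : ∀ s ∈ K, f s = s := by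
      intro s hs
      have := hlin s hs
      rw [hb] at this
      linarith [this]
    obtain ⟨x, ⟨s₀, hs₀, rfl⟩, hmv'⟩ := hmv
    apply hmv'
    rw [← hfc s₀ hs₀, hid s₀ hs₀]
  · -- antitone case: f s = -s
    have hem1 : ∀ s ∈ K, HasDerivWithinAt f (-1) K s := by
      refine hfd (-1) (fun s hs t ht hts => ?_)
      rw [slope_def_field]
      rcases hts.lt_or_gt with h | h
      · rw [abs_of_pos (sub_pos.mpr (hanti ht hs h)), abs_of_neg (sub_neg.mpr h),
          div_neg, neg_mul, one_mul, neg_neg]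
      · rw [abs_of_neg (sub_neg.mpr (hanti hs ht h)), abs_of_pos (sub_pos.mpr h),
          neg_div, neg_mul, one_mul, neg_neg]
    have hlin := hkey (-1) hem1
    have hb1 : f (-(l/2)) ∈ K := hfK _ (by rw [hK]; exact ⟨le_refl _, hle⟩)
    have hb2 : f (l/2) ∈ K := hfK _ (by rw [hK]; exact ⟨hle, le_refl _⟩)
    have hfl2 : f (l/2) = f (-(l/2)) + (-1) * (l/2 + l/2) :=
      hlin (l/2) (by rw [hK]; exact ⟨hle, le_refl _⟩)
    rw [hK, mem_Icc] at hb1 hb2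
    have hb : f (-(l/2)) = l/2 := by
      have := hb2.1
      rw [hfl2] at this
      linarith [hb1.2]
    intro s hs
    have hfs : f s = -s := by
      have := hlin s hs
      rw [hb] at this
      linarith [this]
    rw [← hfc s hs, hfs]

/-- An embedded space curve `C = c([-l/2,l/2])` admits both a positive (det = 1)
and a negative (det = -1) orientation-reversing symmetry (i.e. `T (c s) = c (-s)`)
simultaneously if and only if `C` lies in a plane and `C` has a non-trivial
symmetry (an isometry preserving `C` that moves some point of `C`). -/
theorem stmt_2 (l : ℝ) (hl : 0 < l)
    (c : ℝ → EuclideanSpace ℝ (Fin 3))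
    (K : Set ℝ) (hK : K = Icc (-(l/2)) (l/2))
    (hc_smooth : ContDiffOn ℝ (⊤ : ℕ∞) c K)
    (hc_inj : InjOn c K)
    (harc : ∀ s ∈ K, ‖deriv c s‖ = 1)
    (hκpos : ∀ s ∈ K, deriv (deriv c) s ≠ 0)
    (C : Set (EuclideanSpace ℝ (Fin 3))) (hC : C = c '' K) :
    ((∃ (A : EuclideanSpace ℝ (Fin 3) ≃ₗᵢ[ℝ] EuclideanSpace ℝ (Fin 3))
        (w : EuclideanSpace ℝ (Fin 3)),
        LinearMap.det (A.toLinearEquiv :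
          EuclideanSpace ℝ (Fin 3) →ₗ[ℝ] EuclideanSpace ℝ (Fin 3)) = 1 ∧
        (fun x => A x + w) ≠ id ∧
        (∀ s ∈ K, A (c s) + w = c (-s))) ∧
     (∃ (A : EuclideanSpace ℝ (Fin 3) ≃ₗᵢ[ℝ] EuclideanSpace ℝ (Fin 3))
        (w : EuclideanSpace ℝ (Fin 3)),
        LinearMap.det (A.toLinearEquiv :
          EuclideanSpace ℝ (Fin 3) →ₗ[ℝ] EuclideanSpace ℝ (Fin 3)) = -1 ∧
        (fun x => A x + w) ≠ id ∧
        (∀ s ∈ K, A (c s) + w = c (-s))))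
    ↔
    ((∃ (v : EuclideanSpace ℝ (Fin 3)) (a : ℝ), v ≠ 0 ∧ ∀ s ∈ K, ⟪v, c s⟫ = a) ∧
     (∃ (A : EuclideanSpace ℝ (Fin 3) ≃ₗᵢ[ℝ] EuclideanSpace ℝ (Fin 3))
        (w : EuclideanSpace ℝ (Fin 3)),
        (fun x => A x + w) '' C = C ∧ ∃ x ∈ C, A x + w ≠ x)) := by
  subst hK hC
  have hle : -(l/2) ≤ l/2 := by linarith
  have hl2 : l/2 ∈ Icc (-(l/2)) (l/2) := ⟨hle, le_refl _⟩
  have hml2 : -(l/2) ∈ Icc (-(l/2)) (l/2) := ⟨le_refl _, hle⟩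
  have hKneg : ∀ s ∈ Icc (-(l/2)) (l/2), -s ∈ Icc (-(l/2)) (l/2) := by
    intro s hs
    rw [mem_Icc] at hs ⊢
    constructor <;> linarith [hs.1, hs.2]
  constructor
  · rintro ⟨⟨A₁, w₁, hd₁, hne₁, h₁⟩, ⟨A₂, w₂, hd₂, hne₂, h₂⟩⟩
    constructor
    · -- the curve lies in a plane
      set Lmap : E3 →ₗ[ℝ] E3 :=
        ((A₂.symm.toLinearEquiv : E3 →ₗ[ℝ] E3) ∘ₗ (A₁.toLinearEquiv : E3 →ₗ[ℝ] E3))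
          - LinearMap.id with hLmap
      have hdet2symm : LinearMap.det (A₂.symm.toLinearEquiv : E3 →ₗ[ℝ] E3) = -1 := by
        have hcomp : (A₂.toLinearEquiv : E3 →ₗ[ℝ] E3)
            ∘ₗ (A₂.symm.toLinearEquiv : E3 →ₗ[ℝ] E3) = LinearMap.id := by
          ext x; simp
        have h := congrArg LinearMap.det hcomp
        rw [LinearMap.det_comp, LinearMap.det_id, hd₂] at h
        linarith
      have hdiffmem : ∀ s ∈ Icc (-(l/2)) (l/2), ∀ t ∈ Icc (-(l/2)) (l/2),
          c s - c t ∈ LinearMap.ker Lmap := by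
        intro s hs t ht
        rw [LinearMap.mem_ker, hLmap]
        have e1 : A₁ (c s) + w₁ = A₂ (c s) + w₂ := by rw [h₁ s hs, h₂ s hs]
        have e2 : A₁ (c t) + w₁ = A₂ (c t) + w₂ := by rw [h₁ t ht, h₂ t ht]
        have e3 : A₁ (c s - c t) = A₂ (c s - c t) := by
          rw [map_sub, map_sub]
          have : A₁ (c s) - A₁ (c t) = (A₁ (c s) + w₁) - (A₁ (c t) + w₁) := by abel
          rw [this, e1, e2]; abel
        simp only [LinearMap.sub_apply, LinearMap.coe_comp, Function.comp_apply,
          LinearMap.id_coe, id_eq, LinearEquiv.coe_coe,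
          LinearIsometryEquiv.coe_toLinearEquiv]
        rw [e3]
        simp
      have hker : LinearMap.ker Lmap ≠ ⊤ := by
        intro hk
        have hz : Lmap = 0 := LinearMap.ker_eq_top.mp hk
        have hid : (A₂.symm.toLinearEquiv : E3 →ₗ[ℝ] E3)
            ∘ₗ (A₁.toLinearEquiv : E3 →ₗ[ℝ] E3) = LinearMap.id := by
          have := sub_eq_zero.mp (hLmap ▸ hz)
          exact this
        have h := congrArg LinearMap.det hid
        rw [LinearMap.det_comp, LinearMap.det_id, hdet2symm, hd₁] at h
        linarith
      have hone : (LinearMap.ker Lmap)ᗮ ≠ ⊥ := by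
        intro h
        exact hker (Submodule.orthogonal_eq_bot_iff.mp h)
      obtain ⟨v, hvmem, hv0⟩ := Submodule.ne_bot_iff _ |>.mp hone
      refine ⟨v, ⟪v, c (l/2)⟫, hv0, fun s hs => ?_⟩
      have hm := hdiffmem s hs (l/2) hl2
      have h0 : ⟪c s - c (l/2), v⟫ = 0 :=
        (Submodule.mem_orthogonal _ v).mp hvmem _ hm
      rw [real_inner_comm] at h0
      rw [inner_sub_right] at h0
      linarith
    · -- a non-trivial symmetry
      refine ⟨A₁, w₁, ?_, c (l/2), mem_image_of_mem _ hl2, ?_⟩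
      · rw [image_image]
        ext x
        simp only [mem_image]
        constructor
        · rintro ⟨s, hs, rfl⟩
          exact ⟨-s, hKneg s hs, (h₁ s hs).symm⟩
        · rintro ⟨u, hu, rfl⟩
          exact ⟨-u, hKneg u hu, by rw [h₁ (-u) (hKneg u hu), neg_neg]⟩
      · rw [h₁ (l/2) hl2]
        intro h
        have := hc_inj hml2 hl2 h
        linarith
  · rintro ⟨⟨v, a, hv0, hva⟩, ⟨A, w, hImg, hmv⟩⟩
    have key : ∀ s ∈ Icc (-(l/2)) (l/2), A (c s) + w = c (-s) :=
      aux_reverse l hl c hc_inj harc A w hImg hmv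
    have hvn : ‖v‖ ≠ 0 := norm_ne_zero_iff.mpr hv0
    set p : E3 := (a / ‖v‖^2) • v with hpdef
    have hp : ⟪v, p⟫ = a := by
      rw [hpdef, real_inner_smul_right, real_inner_self_eq_norm_sq]
      field_simp
    set ρ := Submodule.reflection ((ℝ ∙ v)ᗮ : Submodule ℝ E3) with hρ
    have hfix : ∀ x : E3, ⟪v, x⟫ = a → ρ (x - p) + p = x := by
      intro x hx
      have hxm : x - p ∈ ((ℝ ∙ v)ᗮ : Submodule ℝ E3) := by
        rw [Submodule.mem_orthogonal_singleton_iff_inner_right, inner_sub_right, hx, hp,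
          sub_self]
      rw [hρ, Submodule.reflection_mem_subspace_eq_self hxm, sub_add_cancel]
    have hcomp : ∀ (B : E3 ≃ₗᵢ[ℝ] E3) (u : E3),
        (∀ s ∈ Icc (-(l/2)) (l/2), B (c s) + u = c (-s)) →
        ∀ s ∈ Icc (-(l/2)) (l/2), (B.trans ρ) (c s) + (ρ (u - p) + p) = c (-s) := by
      intro B u hB s hs
      have h1 : (B.trans ρ) (c s) + (ρ (u - p) + p) = ρ (B (c s) + u - p) + p := by
        rw [LinearIsometryEquiv.trans_apply]
        rw [show B (c s) + u - p = B (c s) + (u - p) by abel, map_add]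
        abel
      rw [h1, hB s hs, hfix _ (hva (-s) (hKneg s hs))]
    have hne : ∀ (B : E3 ≃ₗᵢ[ℝ] E3) (u : E3),
        (∀ s ∈ Icc (-(l/2)) (l/2), B (c s) + u = c (-s)) →
        (fun x => B x + u) ≠ id := by
      intro B u hB h
      have h1 : B (c (l/2)) + u = c (l/2) := congrFun h (c (l/2))
      rw [hB (l/2) hl2] at h1
      have := hc_inj hml2 hl2 h1
      linarith
    have hdtr : ∀ (B : E3 ≃ₗᵢ[ℝ] E3),
        LinearMap.det ((B.trans ρ).toLinearEquiv : E3 →ₗ[ℝ] E3)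
          = - LinearMap.det ((B.toLinearEquiv : E3 →ₗ[ℝ] E3)) := by
      intro B
      rw [aux_det_trans, hρ, aux_det_reflection v hv0]
      ring
    rcases aux_det_pm_one A with hd | hd
    · exact ⟨⟨A, w, hd, hne A w key, key⟩,
        ⟨A.trans ρ, ρ (w - p) + p, by rw [hdtr, hd], hne _ _ (hcomp A w key),
          hcomp A w key⟩⟩
    · exact ⟨⟨A.trans ρ, ρ (w - p) + p, by rw [hdtr, hd]; ring,
          hne _ _ (hcomp A w key), hcomp A w key⟩,
        ⟨A, w, hd, hne A w key, key⟩⟩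
end

section
/- Let F, G be developable strips along C in normal form (with normalized ruling vector fields satisfying ξ·n > 0 along C, n the principal normal). Then for all sufficiently small ε > 0, the image F(J × (0,ε)) is disjoint from G(J × (-ε,0)). -/
open Set Real RealInnerProductSpace

private lemma aux_mono_stmt10 {f f' : ℝ → ℝ} {a b : ℝ} (hab : a ≤ b)
    (hd : ∀ x ∈ Set.Icc a b, HasDerivAt f (f' x) x)
    (h0 : ∀ x ∈ Set.Icc a b, 0 ≤ f' x) : f a ≤ f b := by
  have hmono := monotoneOn_of_deriv_nonneg (convex_Icc a b)
    (fun x hx => (hd x hx).continuousAt.continuousWithinAt)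
    (fun x hx =>
      ((hd x (interior_subset hx)).differentiableAt).differentiableWithinAt)
    (fun x hx => by
      rw [(hd x (interior_subset hx)).deriv]; exact h0 x (interior_subset hx))
  exact hmono (left_mem_Icc.2 hab) (right_mem_Icc.2 hab) hab

/-- Let `F, G` be developable strips in normal form along a compact embedded
arc-length parametrized curve `C = c(K)` with nowhere vanishing curvature,
whose ruling vector fields satisfy `⟪ξ, n⟫ > 0` (`n` the principal normal).
Then for all sufficiently small `ε > 0` the image `F(K × (0,ε))` is disjoint
from `G(K × (-ε,0))`. -/
theorem stmt_10 (l : ℝ) (hl : 0 < l)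
    (K : Set ℝ) (hK : K = Icc (-(l/2)) (l/2))
    (c e n : ℝ → EuclideanSpace ℝ (Fin 3)) (κ : ℝ → ℝ)
    (hc_smooth : ContDiffOn ℝ (⊤ : ℕ∞) c K) (hc_inj : InjOn c K)
    (he : ∀ s ∈ K, deriv c s = e s)
    (hunit : ∀ s ∈ K, ‖e s‖ = 1 ∧ ‖n s‖ = 1)
    (hen : ∀ s ∈ K, ⟪e s, n s⟫ = 0)
    (hκpos : ∀ s ∈ K, 0 < κ s)
    (hfrenet1 : ∀ s ∈ K, deriv e s = κ s • n s)
    (ξF ξG : ℝ → EuclideanSpace ℝ (Fin 3))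
    (hcontF : ContinuousOn ξF K) (hcontG : ContinuousOn ξG K)
    (hunitF : ∀ s ∈ K, ‖ξF s‖ = 1) (hunitG : ∀ s ∈ K, ‖ξG s‖ = 1)
    (hposF : ∀ s ∈ K, 0 < ⟪ξF s, n s⟫) (hposG : ∀ s ∈ K, 0 < ⟪ξG s, n s⟫)
    (F G : ℝ × ℝ → EuclideanSpace ℝ (Fin 3))
    (hF : ∀ p : ℝ × ℝ, F p = c p.1 + p.2 • ξF p.1)
    (hG : ∀ p : ℝ × ℝ, G p = c p.1 + p.2 • ξG p.1) :
    ∃ ε₀ > 0, ∀ ε : ℝ, 0 < ε → ε ≤ ε₀ →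
      (F '' (K ×ˢ Ioo 0 ε)) ∩ (G '' (K ×ˢ Ioo (-ε) 0)) = ∅ := by
  have hl2 : -(l/2) < l/2 := by linarith
  have hKc : IsCompact K := hK ▸ isCompact_Icc
  have hKcl : IsClosed K := hK ▸ isClosed_Icc
  have hUD : UniqueDiffOn ℝ K := hK ▸ uniqueDiffOn_Icc hl2
  have hIccK : ∀ a b : ℝ, a ∈ K → b ∈ K → Icc a b ⊆ K := by
    intro a b ha hb
    rw [hK] at ha hb ⊢
    exact Icc_subset_Icc ha.1 hb.2
  -- c has derivative e on K
  have hcd : ∀ s ∈ K, HasDerivAt c (e s) s := by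
    intro s hs
    have h1 : DifferentiableAt ℝ c s := by
      by_contra h
      have h2 := deriv_zero_of_not_differentiableAt h
      rw [he s hs] at h2
      have h3 := (hunit s hs).1
      rw [h2, norm_zero] at h3
      norm_num at h3
    have := h1.hasDerivAt
    rwa [he s hs] at this
  -- e has derivative κ • n on K
  have hed : ∀ s ∈ K, HasDerivAt e (κ s • n s) s := by
    intro s hs
    have h1 : DifferentiableAt ℝ e s := by
      by_contra h
      have h2 := deriv_zero_of_not_differentiableAt h
      rw [hfrenet1 s hs] at h2
      have h3 : ‖κ s • n s‖ = κ s := by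
        rw [norm_smul, (hunit s hs).2, Real.norm_eq_abs,
          abs_of_pos (hκpos s hs), mul_one]
      rw [h2, norm_zero] at h3
      exact absurd h3.symm (ne_of_gt (hκpos s hs))
    have := h1.hasDerivAt
    rwa [hfrenet1 s hs] at this
  set N : ℝ → EuclideanSpace ℝ (Fin 3) :=
    fun s => derivWithin (derivWithin c K) K s with hN_def
  have hdwc : ∀ s ∈ K, derivWithin c K s = e s := by
    intro s hs
    rw [(hcd s hs).differentiableAt.derivWithin (hUD s hs), he s hs]
  have hN : ∀ s ∈ K, N s = κ s • n s := by
    intro s hs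
    have h1 : derivWithin e K s = deriv e s :=
      (hed s hs).differentiableAt.derivWithin (hUD s hs)
    have h2 : derivWithin e K s = N s :=
      derivWithin_congr (fun u hu => (hdwc u hu).symm) (hdwc s hs).symm
    rw [← h2, h1, hfrenet1 s hs]
  have hNcont : ContinuousOn N K :=
    ((hc_smooth.derivWithin (m := (⊤ : ℕ∞)) hUD (by simp)).derivWithin (m := (⊤ : ℕ∞)) hUD (by simp)).continuousOn
  have hκN : ∀ s ∈ K, ‖N s‖ = κ s := by
    intro s hs
    rw [hN s hs, norm_smul, (hunit s hs).2, Real.norm_eq_abs,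
      abs_of_pos (hκpos s hs), mul_one]
  set nn : ℝ → EuclideanSpace ℝ (Fin 3) := fun s => ‖N s‖⁻¹ • N s with hnn_def
  have hnn : ∀ s ∈ K, nn s = n s := by
    intro s hs
    simp only [hnn_def]
    rw [hκN s hs, hN s hs, smul_smul, inv_mul_cancel₀ (ne_of_gt (hκpos s hs)),
      one_smul]
  set Φ : ℝ × ℝ → ℝ :=
    fun p => min (⟪N p.1, N p.2⟫) (⟪ξF p.1, nn p.2⟫) with hΦ_def
  have hnncont : ContinuousOn nn K := by
    apply ContinuousOn.smul (?_ : ContinuousOn (fun s => ‖N s‖⁻¹) K) hNcont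
    exact (hNcont.norm).inv₀ (fun s hs => by
      rw [hκN s hs]; exact (hκpos s hs).ne')
  have hΦcont : ContinuousOn Φ (K ×ˢ K) := by
    have h1 : ∀ p : ℝ × ℝ, p ∈ K ×ˢ K → p.1 ∈ K := fun p hp => hp.1
    have h2 : ∀ p : ℝ × ℝ, p ∈ K ×ˢ K → p.2 ∈ K := fun p hp => hp.2
    have hc1 : ContinuousOn (fun p : ℝ × ℝ => (⟪N p.1, N p.2⟫ : ℝ)) (K ×ˢ K) :=
      ContinuousOn.inner
        (hNcont.comp continuousOn_fst h1) (hNcont.comp continuousOn_snd h2)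
    have hc2 : ContinuousOn (fun p : ℝ × ℝ => (⟪ξF p.1, nn p.2⟫ : ℝ)) (K ×ˢ K) :=
      ContinuousOn.inner
        (hcontF.comp continuousOn_fst h1) (hnncont.comp continuousOn_snd h2)
    exact fun x hx => (hc1 x hx).min (hc2 x hx)
  have hΦdiag : ∀ t ∈ K, 0 < Φ (t, t) := by
    intro t ht
    apply lt_min
    · have : ⟪N t, N t⟫ = ‖N t‖ ^ 2 := real_inner_self_eq_norm_sq (N t)
      rw [this, hκN t ht]
      exact pow_pos (hκpos t ht) 2
    · rw [hnn t ht]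
      exact hposF t ht
  -- A : the "bad" compact set where Φ ≤ 0
  have hAcl : IsClosed ((K ×ˢ K) ∩ Φ ⁻¹' (Iic 0)) :=
    hΦcont.preimage_isClosed_of_isClosed (hKcl.prod hKcl) isClosed_Iic
  have hAcomp : IsCompact ((K ×ˢ K) ∩ Φ ⁻¹' (Iic 0)) :=
    (hKc.prod hKc).of_isClosed_subset hAcl inter_subset_left
  obtain ⟨r, hr0, hrA⟩ :
      ∃ r > 0, ∀ p ∈ (K ×ˢ K) ∩ Φ ⁻¹' (Iic 0), r ≤ dist p.1 p.2 := by
    by_cases hA : ((K ×ˢ K) ∩ Φ ⁻¹' (Iic 0)).Nonempty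
    · obtain ⟨p0, hp0, hmin⟩ := hAcomp.exists_isMinOn hA
        ((continuous_fst.dist continuous_snd).continuousOn)
      refine ⟨dist p0.1 p0.2, ?_, fun p hp => hmin hp⟩
      rcases (dist_nonneg : (0:ℝ) ≤ dist p0.1 p0.2).lt_or_eq with h | h
      · exact h
      · exfalso
        have hp12 : p0.1 = p0.2 := dist_eq_zero.mp h.symm
        have h3 : ((p0.1, p0.1) : ℝ × ℝ) = p0 := by
          rw [← Prod.mk.eta (p := p0)]
          exact congrArg _ hp12
        have h2 := hΦdiag p0.1 hp0.1.1
        rw [h3] at h2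
        have h4 : Φ p0 ≤ 0 := by simpa using hp0.2
        exact absurd h2 (not_lt.2 h4)
    · exact ⟨1, one_pos, fun p hp => absurd ⟨p, hp⟩ hA⟩
  have hΦpos : ∀ s ∈ K, ∀ t ∈ K, dist s t < r → 0 < Φ (s, t) := by
    intro s hs t ht hd
    by_contra h
    push_neg at h
    have hmem : ((s, t) : ℝ × ℝ) ∈ (K ×ˢ K) ∩ Φ ⁻¹' (Iic 0) :=
      ⟨⟨hs, ht⟩, by simpa using h⟩
    exact absurd (hrA _ hmem) (not_le.2 hd)
  -- B : pairs at distance ≥ r; get a lower chord bound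
  have hBcl : IsClosed ((K ×ˢ K) ∩ {p : ℝ × ℝ | r ≤ dist p.1 p.2}) :=
    IsClosed.inter (hKcl.prod hKcl)
      (isClosed_le continuous_const (continuous_fst.dist continuous_snd))
  have hBcomp : IsCompact ((K ×ˢ K) ∩ {p : ℝ × ℝ | r ≤ dist p.1 p.2}) :=
    (hKc.prod hKc).of_isClosed_subset hBcl inter_subset_left
  obtain ⟨m, hm0, hmB⟩ : ∃ m > 0,
      ∀ p ∈ (K ×ˢ K) ∩ {p : ℝ × ℝ | r ≤ dist p.1 p.2},
        m ≤ ‖c p.1 - c p.2‖ := by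
    by_cases hB : ((K ×ˢ K) ∩ {p : ℝ × ℝ | r ≤ dist p.1 p.2}).Nonempty
    · have hccont : ContinuousOn (fun p : ℝ × ℝ => ‖c p.1 - c p.2‖)
          ((K ×ˢ K) ∩ {p : ℝ × ℝ | r ≤ dist p.1 p.2}) := by
        apply ContinuousOn.norm
        apply ContinuousOn.sub
        · exact (hc_smooth.continuousOn.comp continuousOn_fst
            (fun p hp => hp.1)).mono inter_subset_left
        · exact (hc_smooth.continuousOn.comp continuousOn_snd
            (fun p hp => hp.2)).mono inter_subset_left
      obtain ⟨p0, hp0, hmin⟩ := hBcomp.exists_isMinOn hB hccont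
      refine ⟨‖c p0.1 - c p0.2‖, ?_, fun p hp => hmin hp⟩
      rcases (norm_nonneg (c p0.1 - c p0.2)).lt_or_eq with h | h
      · exact h
      · exfalso
        have hceq : c p0.1 = c p0.2 := by
          have := norm_eq_zero.mp h.symm
          exact sub_eq_zero.mp this
        have hpeq : p0.1 = p0.2 := hc_inj hp0.1.1 hp0.1.2 hceq
        have : r ≤ dist p0.1 p0.2 := hp0.2
        rw [hpeq, dist_self] at this
        exact absurd this (not_le.2 hr0)
    · exact ⟨1, one_pos, fun p hp => absurd ⟨p, hp⟩ hB⟩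
  refine ⟨m / 4, by positivity, ?_⟩
  intro ε hε hεm
  rw [eq_empty_iff_forall_notMem]
  rintro x ⟨⟨⟨s, v⟩, ⟨hsK, hv⟩, hFx⟩, ⟨⟨t, w⟩, ⟨htK, hw⟩, hGx⟩⟩
  simp only [mem_Ioo] at hv hw
  have heq : c s + v • ξF s = c t + w • ξG t := by
    have := hFx.trans hGx.symm
    rwa [hF, hG] at this
  have hcst : c s - c t = w • ξG t - v • ξF s := by
    linear_combination (norm := module) heq
  -- the chord is short
  have hchord : ‖c s - c t‖ < m := by
    rw [hcst]
    calc ‖w • ξG t - v • ξF s‖ ≤ ‖w • ξG t‖ + ‖v • ξF s‖ := norm_sub_le _ _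
    _ = |w| + |v| := by
        rw [norm_smul, norm_smul, hunitG t htK, hunitF s hsK,
          Real.norm_eq_abs, Real.norm_eq_abs, mul_one, mul_one]
    _ < ε + ε := by
        apply add_lt_add
        · rw [abs_lt]; exact ⟨hw.1, by linarith [hw.2]⟩
        · rw [abs_of_pos hv.1]; exact hv.2
    _ < m := by linarith
  -- hence s and t are close
  have hdist : dist s t < r := by
    by_contra h
    push_neg at h
    have : m ≤ ‖c s - c t‖ :=
      hmB ((s, t) : ℝ × ℝ) ⟨⟨hsK, htK⟩, h⟩
    linarith
  -- second-derivative positivity near t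
  have hkey : ∀ u ∈ K, dist u t < r → 0 ≤ ⟪κ u • n u, nn t⟫ := by
    intro u huK hdu
    have hΦ := hΦpos u huK t htK hdu
    have h1 : 0 < ⟪N u, N t⟫ := lt_of_lt_of_le hΦ (min_le_left _ _)
    rw [← hN u huK]
    simp only [hnn_def]
    rw [real_inner_smul_right]
    exact mul_nonneg (inv_nonneg.2 (norm_nonneg _)) h1.le
  -- the functions f (height) and f1 (its derivative)
  set f : ℝ → ℝ := fun u => ⟪c u - c t, nn t⟫ with hf_def
  set f1 : ℝ → ℝ := fun u => ⟪e u, nn t⟫ with hf1_def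
  have hfd : ∀ u ∈ K, HasDerivAt f (f1 u) u := by
    intro u hu
    have h := HasDerivAt.inner ℝ ((hcd u hu).sub_const (c t))
      (hasDerivAt_const u (nn t))
    simpa [hf_def, hf1_def] using h
  have hf1d : ∀ u ∈ K, HasDerivAt f1 (⟪κ u • n u, nn t⟫) u := by
    intro u hu
    have h := HasDerivAt.inner ℝ (hed u hu) (hasDerivAt_const u (nn t))
    simpa [hf1_def] using h
  have hf1t : f1 t = 0 := by
    simp only [hf1_def]
    rw [hnn t htK]
    exact hen t htK
  have hft : f t = 0 := by simp [hf_def]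
  have hrd : |s - t| < r := by rwa [Real.dist_eq] at hdist
  -- 0 ≤ f s
  have hfs : 0 ≤ f s := by
    rcases le_total t s with hts | hts
    · have hsub : Icc t s ⊆ K := hIccK t s htK hsK
      have h1 : ∀ x ∈ Icc t s, 0 ≤ f1 x := by
        intro x hx
        have h2 : f1 t ≤ f1 x := by
          apply aux_mono_stmt10 hx.1
            (fun u hu => hf1d u (hsub ⟨hu.1, hu.2.trans hx.2⟩))
          intro u hu
          apply hkey u (hsub ⟨hu.1, hu.2.trans hx.2⟩)
          rw [Real.dist_eq, abs_of_nonneg (by linarith [hu.1] : (0:ℝ) ≤ u - t)]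
          have h3 := le_abs_self (s - t)
          have := hu.2
          have := hx.2
          linarith
        rwa [hf1t] at h2
      have h2 : f t ≤ f s :=
        aux_mono_stmt10 hts (fun u hu => hfd u (hsub hu)) h1
      linarith
    · have hsub : Icc s t ⊆ K := hIccK s t hsK htK
      have h1 : ∀ x ∈ Icc s t, f1 x ≤ 0 := by
        intro x hx
        have h2 : f1 x ≤ f1 t := by
          apply aux_mono_stmt10 hx.2
            (fun u hu => hf1d u (hsub ⟨hx.1.trans hu.1, hu.2⟩))
          intro u hu
          apply hkey u (hsub ⟨hx.1.trans hu.1, hu.2⟩)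
          rw [Real.dist_eq, abs_sub_comm,
            abs_of_nonneg (by linarith [hu.2] : (0:ℝ) ≤ t - u)]
          have h3 : t - s ≤ |s - t| := by
            rw [abs_sub_comm]; exact le_abs_self _
          have := hu.1
          have := hx.1
          linarith
        rwa [hf1t] at h2
      have h2 : -f s ≤ -f t := by
        apply aux_mono_stmt10 (f := fun u => -f u) (f' := fun u => -f1 u) hts
          (fun u hu => (hfd u (hsub hu)).neg)
          (fun u hu => neg_nonneg.2 (h1 u hu))
      linarith
  -- but f s < 0, contradiction
  have hGt : 0 < ⟪ξG t, nn t⟫ := by rw [hnn t htK]; exact hposG t htK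
  have hFst : 0 < ⟪ξF s, nn t⟫ :=
    lt_of_lt_of_le (hΦpos s hsK t htK hdist) (min_le_right _ _)
  have hneg : f s < 0 := by
    show ⟪c s - c t, nn t⟫ < 0
    rw [hcst, inner_sub_left, real_inner_smul_left, real_inner_smul_left]
    have h1 : w * ⟪ξG t, nn t⟫ < 0 := mul_neg_of_neg_of_pos hw.2 hGt
    have h2 : 0 < v * ⟪ξF s, nn t⟫ := mul_pos hv.1 hFst
    linarith
  linarith
end
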